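/- arXiv:1106.2994 — 4 statements merged into one kernel-verified Lean document; each statement's English description precedes it below -/
import Mathlib

section
/- Let λ > 0, let k ≥ 1 be an integer, and let a ≥ 0. If X and Y are independent random variables on a probability space, X having the exponential distribution with rate λ and Y having the Gamma distribution with shape k and rate λ, then P(X ≥ Y + a) = (1/2)^k · e^{−λa}. -/
/-!
Conditioning on `Y`, the exponential tail gives `P(X ≥ Y + a) = E[e^{-λ(Y + a)}]`, i.e.
`e^{-λa}` times the Laplace transform of `Gamma(k, λ)` at `λ`. Since `e^{-sy}` times the
`Gamma(k, r)` density is `(r / (r + s))^k` times the `Gamma(k, r + s)` density, that transform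
is `(λ / 2λ)^k = (1/2)^k`.
-/

open MeasureTheory ProbabilityTheory Real Set

lemma ae_nonneg_gammaMeasure (a r : ℝ) : ∀ᵐ x ∂gammaMeasure a r, 0 ≤ x := by
  rw [ae_iff]
  simp only [not_le]
  exact (withDensity_apply _ measurableSet_Iio).trans (lintegral_gammaPDF_of_nonpos le_rfl)

lemma gammaPDF_mul_exp_neg_mul {a r s x : ℝ} (hr : 0 < r) (hrs : 0 < r + s) :
    gammaPDF a r x * ENNReal.ofReal (exp (-(s * x))) =
      ENNReal.ofReal ((r / (r + s)) ^ a) * gammaPDF a (r + s) x := by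
  rcases lt_or_ge x 0 with hx | hx
  · simp [gammaPDF_of_neg hx]
  rw [gammaPDF_of_nonneg hx, gammaPDF_of_nonneg hx, ← ENNReal.ofReal_mul' (exp_pos _).le,
    ← ENNReal.ofReal_mul (by positivity), div_rpow hr.le hrs.le]
  congr 1
  rw [show -((r + s) * x) = -(r * x) + -(s * x) by ring, exp_add]
  field_simp

lemma lintegral_exp_neg_mul_gammaMeasure {a r s : ℝ} (ha : 0 < a) (hr : 0 < r)
    (hrs : 0 < r + s) :
    ∫⁻ x, ENNReal.ofReal (exp (-(s * x))) ∂gammaMeasure a r =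
      ENNReal.ofReal ((r / (r + s)) ^ a) := by
  have hmeas (b : ℝ) : Measurable (gammaPDF a b) := (measurable_gammaPDFReal a b).ennreal_ofReal
  rw [gammaMeasure, lintegral_withDensity_eq_lintegral_mul _ (hmeas r) (by fun_prop)]
  simp_rw [Pi.mul_apply, gammaPDF_mul_exp_neg_mul hr hrs]
  rw [lintegral_const_mul _ (hmeas _), lintegral_gammaPDF_eq_one ha hrs, mul_one]

lemma expMeasure_Ici {r t : ℝ} (hr : 0 < r) (ht : 0 ≤ t) :
    expMeasure r (Ici t) = ENNReal.ofReal (exp (-(r * t))) := by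
  have := isProbabilityMeasure_expMeasure hr
  have hatom : expMeasure r {t} = 0 :=
    withDensity_absolutelyContinuous _ _ (measure_singleton t)
  have hexp_le : exp (-(r * t)) ≤ 1 := exp_le_one_iff.mpr (by nlinarith)
  rw [← measure_congr (Ioi_ae_eq_Ici' hatom), ← compl_Iic,
    prob_compl_eq_one_sub measurableSet_Iic, ← ofReal_cdf, cdf_expMeasure_eq hr, if_pos ht,
    ← ENNReal.ofReal_one, ← ENNReal.ofReal_sub _ (sub_nonneg.mpr hexp_le), sub_sub_cancel]

lemma ProbabilityTheory.IndepFun.measure_ge_add_eq_lintegral {Ω : Type*} [MeasurableSpace Ω]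
    {P : Measure Ω} [IsFiniteMeasure P] {X Y : Ω → ℝ} (hX : Measurable X)
    (hY : Measurable Y) (hXY : IndepFun X Y P) (a : ℝ) :
    P {ω | X ω ≥ Y ω + a} = ∫⁻ y, P.map X (Ici (y + a)) ∂P.map Y := by
  have hs : MeasurableSet {p : ℝ × ℝ | p.1 + a ≤ p.2} :=
    measurableSet_le (measurable_fst.add_const a) measurable_snd
  have hlaw : P.map (fun ω ↦ (Y ω, X ω)) = (P.map Y).prod (P.map X) :=
    (indepFun_iff_map_prod_eq_prod_map_map hY.aemeasurable hX.aemeasurable).mp hXY.symm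
  calc P {ω | X ω ≥ Y ω + a} = P.map (fun ω ↦ (Y ω, X ω)) {p | p.1 + a ≤ p.2} :=
        (Measure.map_apply (hY.prodMk hX) hs).symm
    _ = ∫⁻ y, P.map X (Ici (y + a)) ∂P.map Y := by
        rw [hlaw, Measure.prod_apply hs]; rfl

/-- If `X` and `Y` are independent, `X` exponential with rate
`λ > 0` and `Y` Gamma with integer shape `k ≥ 1` and rate `λ`, then for `a ≥ 0`,
`P(X ≥ Y + a) = (1/2)^k e^{−λa}`. -/
theorem stmt_13 {Ω : Type*} [MeasurableSpace Ω] (P : Measure Ω) [IsProbabilityMeasure P]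
    (l : ℝ) (hl : 0 < l) (k : ℕ) (hk : 1 ≤ k) (a : ℝ) (ha : 0 ≤ a)
    (X Y : Ω → ℝ) (hX : Measurable X) (hY : Measurable Y)
    (hindep : IndepFun X Y P)
    (hXd : P.map X = expMeasure l)
    (hYd : P.map Y = gammaMeasure k l) :
    P {ω | X ω ≥ Y ω + a} = ENNReal.ofReal ((1/2)^k * Real.exp (-(l * a))) := by
  have htail : ∀ᵐ y ∂gammaMeasure k l, expMeasure l (Ici (y + a)) =
      ENNReal.ofReal (exp (-(l * a))) * ENNReal.ofReal (exp (-(l * y))) := by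
    filter_upwards [ae_nonneg_gammaMeasure k l] with y hy
    rw [expMeasure_Ici hl (by linarith), ← ENNReal.ofReal_mul (exp_pos _).le, ← exp_add]
    ring_nf
  have hhalf : l / (l + l) = 1 / 2 := by field_simp; ring
  rw [hindep.measure_ge_add_eq_lintegral hX hY a, hXd, hYd, lintegral_congr_ae htail,
    lintegral_const_mul _ (by fun_prop),
    lintegral_exp_neg_mul_gammaMeasure (by exact_mod_cast hk) hl (by linarith), hhalf,
    rpow_natCast, ← ENNReal.ofReal_mul (exp_pos _).le, mul_comm]
end

section
/- Let λ > 0, let J ≥ 1 be an integer, and let a > 0. If X_1, …, X_J are i.i.d. random variables each having the exponential distribution with rate λ, and S := X_1 + ⋯ + X_J, then P(∃ i ∈ {1,…,J}, 2·X_i ≥ S + a) = J · (1/2)^{J−1} · e^{−λa}. -/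
/-!
For each `i` put `T i = ∑ j ≠ i, X j`, which is independent of `X i`. The event
`2 X i ≥ S + a` is `X i ≥ T i + a`, and by memorylessness its probability is
`e^{-λa} 𝔼[e^{-λ T i}] = e^{-λa} (𝔼[e^{-λ X}])^{J-1} = e^{-λa} (1/2)^{J-1}`, since the Laplace
transform of `Exp(λ)` at `s` is `λ / (λ + s)`. As the `X j` are a.s. nonnegative and `a > 0`,
two of these events can only meet on a null set, so their probabilities add up.
-/

open MeasureTheory ProbabilityTheory Real Set

namespace ProbabilityTheory

lemma expMeasure_eq_withDensity (l : ℝ) :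
    expMeasure l = volume.withDensity (exponentialPDF l) := rfl

lemma measurable_exponentialPDF (l : ℝ) : Measurable (exponentialPDF l) :=
  (measurable_exponentialPDFReal l).ennreal_ofReal

lemma ae_nonneg_expMeasure (l : ℝ) : ∀ᵐ x ∂expMeasure l, 0 ≤ x := by
  simp only [ae_iff, not_le]
  rw [Iio_def, expMeasure_eq_withDensity, withDensity_apply _ measurableSet_Iio,
    lintegral_exponentialPDF_of_nonpos le_rfl]

lemma expMeasure_Ici {l : ℝ} (hl : 0 < l) {t : ℝ} (ht : 0 ≤ t) :
    expMeasure l (Ici t) = ENNReal.ofReal (exp (-(l * t))) := by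
  have := isProbabilityMeasure_expMeasure hl
  have hatom : expMeasure l {t} = 0 := withDensity_absolutelyContinuous _ _ volume_singleton
  have hexp_le : exp (-(l * t)) ≤ 1 := exp_le_one_iff.2 (by nlinarith)
  rw [← compl_Iio, prob_compl_eq_one_sub measurableSet_Iio,
    measure_congr (Iio_ae_eq_Iic' hatom), ← ofReal_cdf, cdf_expMeasure_eq hl, if_pos ht,
    ← ENNReal.ofReal_one, ← ENNReal.ofReal_sub _ (by linarith), sub_sub_cancel]

lemma lintegral_exp_neg_mul_expMeasure {l s : ℝ} (hs : 0 < l + s) :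
    ∫⁻ x, ENNReal.ofReal (exp (-(s * x))) ∂expMeasure l = ENNReal.ofReal (l / (l + s)) := by
  have hdensity : ∀ x, exponentialPDF l x * ENNReal.ofReal (exp (-(s * x)))
      = ENNReal.ofReal (l / (l + s)) * exponentialPDF (l + s) x := by
    intro x
    rcases le_or_gt 0 x with hx | hx
    · rw [exponentialPDF_of_nonneg hx, exponentialPDF_of_nonneg hx,
        ← ENNReal.ofReal_mul' (exp_nonneg _), ← ENNReal.ofReal_mul' (by positivity)]
      congr 1
      field_simp
      rw [mul_assoc, ← exp_add]
      ring_nf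
    · rw [exponentialPDF_of_neg hx, exponentialPDF_of_neg hx, zero_mul, mul_zero]
  rw [expMeasure_eq_withDensity, lintegral_withDensity_eq_lintegral_mul _
    (measurable_exponentialPDF l) (by fun_prop)]
  simp only [Pi.mul_apply, hdensity]
  rw [lintegral_const_mul _ (measurable_exponentialPDF _),
    lintegral_exponentialPDF_eq_one hs, mul_one]

variable {Ω ι : Type*} [MeasurableSpace Ω] {P : Measure Ω} {l : ℝ}

lemma ae_nonneg_of_map_eq_expMeasure {Y : Ω → ℝ} (hY : AEMeasurable Y P)
    (hYd : P.map Y = expMeasure l) : ∀ᵐ ω ∂P, 0 ≤ Y ω :=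
  ae_of_ae_map hY (hYd ▸ ae_nonneg_expMeasure l)

lemma lintegral_exp_neg_mul_sum_of_iIndepFun {X : ι → Ω → ℝ} (hX : ∀ i, Measurable (X i))
    (hindep : iIndepFun X P) (hXd : ∀ i, P.map (X i) = expMeasure l) {s : ℝ} (hs : 0 < l + s)
    (I : Finset ι) :
    ∫⁻ ω, ENNReal.ofReal (exp (-(s * ∑ i ∈ I, X i ω))) ∂P
      = ENNReal.ofReal (l / (l + s)) ^ I.card := by
  have hm : Measurable fun x : ℝ ↦ ENNReal.ofReal (exp (-(s * x))) := by fun_prop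
  have hprod : ∀ ω, ENNReal.ofReal (exp (-(s * ∑ i ∈ I, X i ω)))
      = ∏ i ∈ I, ENNReal.ofReal (exp (-(s * X i ω))) := fun ω ↦ by
    rw [Finset.mul_sum, ← Finset.sum_neg_distrib, exp_sum,
      ENNReal.ofReal_prod_of_nonneg fun i _ ↦ exp_nonneg _]
  simp_rw [hprod]
  rw [lintegral_prod_eq_prod_lintegral_of_indepFun I
    (fun i ω ↦ ENNReal.ofReal (exp (-(s * X i ω)))) (hindep.comp _ fun _ ↦ hm)
    fun i ↦ hm.comp (hX i)]
  simp_rw [← lintegral_map hm (hX _), hXd,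
    lintegral_exp_neg_mul_expMeasure hs, Finset.prod_const]

lemma measure_add_le_of_indepFun_expMeasure [IsFiniteMeasure P] {T Y : Ω → ℝ}
    (hT : Measurable T) (hY : Measurable Y) (hTY : IndepFun T Y P) (hl : 0 < l)
    (hYd : P.map Y = expMeasure l) (hT0 : ∀ᵐ ω ∂P, 0 ≤ T ω) {a : ℝ} (ha : 0 ≤ a) :
    P {ω | T ω + a ≤ Y ω}
      = ENNReal.ofReal (exp (-(l * a))) * ∫⁻ ω, ENNReal.ofReal (exp (-(l * T ω))) ∂P := by
  have := isProbabilityMeasure_expMeasure hl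
  have hm : Measurable fun x : ℝ ↦ ENNReal.ofReal (exp (-(l * x))) := by fun_prop
  have hset : MeasurableSet {p : ℝ × ℝ | p.1 + a ≤ p.2} :=
    measurableSet_le (by fun_prop) (by fun_prop)
  have hjoint : P.map (fun ω ↦ (T ω, Y ω)) = (P.map T).prod (expMeasure l) := by
    rw [← hYd]
    exact (indepFun_iff_map_prod_eq_prod_map_map hT.aemeasurable hY.aemeasurable).1 hTY
  have hsurvival : ∀ᵐ t ∂P.map T, expMeasure l (Ici (t + a))
      = ENNReal.ofReal (exp (-(l * a))) * ENNReal.ofReal (exp (-(l * t))) := by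
    filter_upwards [(ae_map_iff hT.aemeasurable measurableSet_Ici).2 hT0] with t ht
    rw [expMeasure_Ici hl (add_nonneg ht ha), ← ENNReal.ofReal_mul (exp_nonneg _), ← exp_add]
    ring_nf
  calc P {ω | T ω + a ≤ Y ω}
      = P.map (fun ω ↦ (T ω, Y ω)) {p | p.1 + a ≤ p.2} :=
        (Measure.map_apply (hT.prodMk hY) hset).symm
    _ = ∫⁻ t, expMeasure l (Ici (t + a)) ∂P.map T := by rw [hjoint, Measure.prod_apply hset]; rfl
    _ = _ := by
      rw [lintegral_congr_ae hsurvival, lintegral_const_mul _ hm, lintegral_map hm hT]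

lemma two_mul_lt_sum_add_of_le_two_mul [Fintype ι] {x : ι → ℝ} (hx : ∀ k, 0 ≤ x k) {a : ℝ}
    (ha : 0 < a) {i j : ι} (hij : i ≠ j) (hi : ∑ k, x k + a ≤ 2 * x i) :
    2 * x j < ∑ k, x k + a := by
  classical
  have : x i + x j ≤ ∑ k, x k := by
    rw [← Finset.sum_pair hij]
    exact Finset.sum_le_sum_of_subset_of_nonneg (Finset.subset_univ _) fun k _ _ ↦ hx k
  linarith

lemma measure_sum_add_le_two_mul [IsProbabilityMeasure P] [Fintype ι] {X : ι → Ω → ℝ}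
    (hX : ∀ i, Measurable (X i)) (hindep : iIndepFun X P) (hl : 0 < l)
    (hXd : ∀ i, P.map (X i) = expMeasure l) {a : ℝ} (ha : 0 ≤ a) (i : ι) :
    P {ω | ∑ j, X j ω + a ≤ 2 * X i ω}
      = ENNReal.ofReal ((1 / 2) ^ (Fintype.card ι - 1) * exp (-(l * a))) := by
  classical
  set T := fun ω ↦ ∑ j ∈ Finset.univ.erase i, X j ω
  have hevent : {ω | ∑ j, X j ω + a ≤ 2 * X i ω} = {ω | T ω + a ≤ X i ω} := by
    ext ω
    simp only [mem_ofPred_eq, T, ← Finset.add_sum_erase _ _ (Finset.mem_univ i)]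
    constructor <;> intro h <;> linarith
  have hT0 : ∀ᵐ ω ∂P, 0 ≤ T ω := by
    filter_upwards [ae_all_iff.2 fun j ↦ ae_nonneg_of_map_eq_expMeasure (hX j).aemeasurable
      (hXd j)] with ω hω
    exact Finset.sum_nonneg fun j _ ↦ hω j
  have hTi : IndepFun T (X i) P := by
    convert hindep.indepFun_finsetSum_of_notMem hX (Finset.notMem_erase i Finset.univ)
    ext ω
    exact (Finset.sum_apply ..).symm
  rw [hevent, measure_add_le_of_indepFun_expMeasure (by fun_prop) (hX i) hTi hl (hXd i) hT0 ha,
    lintegral_exp_neg_mul_sum_of_iIndepFun hX hindep hXd (by linarith),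
    Finset.card_erase_of_mem (Finset.mem_univ i), Finset.card_univ,
    show l / (l + l) = 1 / 2 by field_simp; ring, ← ENNReal.ofReal_pow (by norm_num),
    ← ENNReal.ofReal_mul (exp_nonneg _), mul_comm]

end ProbabilityTheory

theorem stmt_15_general {Ω : Type*} [MeasurableSpace Ω] (P : Measure Ω) [IsProbabilityMeasure P]
    (l : ℝ) (hl : 0 < l) (J : ℕ) (a : ℝ) (ha : 0 < a)
    (X : Fin J → Ω → ℝ) (hX : ∀ i, Measurable (X i))
    (hindep : iIndepFun X P)
    (hXd : ∀ i, P.map (X i) = expMeasure l)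
    (S : Ω → ℝ) (hS : S = fun ω => ∑ i, X i ω) :
    P {ω | ∃ i, 2 * X i ω ≥ S ω + a}
      = ENNReal.ofReal ((J : ℝ) * (1/2)^(J - 1) * Real.exp (-(l * a))) := by
  subst hS
  have hnonneg : ∀ᵐ ω ∂P, ∀ k, 0 ≤ X k ω := ae_all_iff.2 fun k ↦
    ae_nonneg_of_map_eq_expMeasure (hX k).aemeasurable (hXd k)
  have hdisj :
      Pairwise (Function.onFun (AEDisjoint P) fun i ↦ {ω | ∑ j, X j ω + a ≤ 2 * X i ω}) :=
    fun i j hij ↦ measure_mono_null (by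
      rintro ω ⟨hi, hj⟩ hω
      exact (two_mul_lt_sum_add_of_le_two_mul hω ha hij hi).not_ge hj) (ae_iff.1 hnonneg)
  simp only [ge_iff_le, ofPred_exists]
  rw [measure_iUnion₀ hdisj fun i ↦
    (measurableSet_le (by fun_prop) (by fun_prop)).nullMeasurableSet, tsum_fintype]
  simp only [measure_sum_add_le_two_mul hX hindep hl hXd ha.le, Finset.sum_const,
    Finset.card_univ, Fintype.card_fin, nsmul_eq_mul]
  rw [← ENNReal.ofReal_natCast, ← ENNReal.ofReal_mul (by positivity), mul_assoc]

/-- If `X_1, …, X_J` are i.i.d. exponential with rate `λ > 0`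
and `S := X_1 + ⋯ + X_J`, then for `a > 0`,
`P(∃ i, 2 X_i ≥ S + a) = J (1/2)^{J−1} e^{−λa}`. -/
theorem stmt_15 {Ω : Type*} [MeasurableSpace Ω] (P : Measure Ω) [IsProbabilityMeasure P]
    (l : ℝ) (hl : 0 < l) (J : ℕ) (hJ : 1 ≤ J) (a : ℝ) (ha : 0 < a)
    (X : Fin J → Ω → ℝ) (hX : ∀ i, Measurable (X i))
    (hindep : iIndepFun X P)
    (hXd : ∀ i, P.map (X i) = expMeasure l)
    (S : Ω → ℝ) (hS : S = fun ω => ∑ i, X i ω) :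
    P {ω | ∃ i, 2 * X i ω ≥ S ω + a}
      = ENNReal.ofReal ((J : ℝ) * (1/2)^(J - 1) * Real.exp (-(l * a))) :=
  stmt_15_general P l hl J a ha X hX hindep hXd S hS
end

section
/- For every integer J ≥ 2, (1/Γ(J)) · ∫₀^{J − 3/2} t^{J−1} e^{−t} dt < 1/2; that is, the regularized lower incomplete Gamma function satisfies G(J − 3/2, J) < 1/2. -/
/-!
The density `f(t) = tⁿ e⁻ᵗ` of `Γ(n + 1)`, with `n = J - 1`, has its mode at `n` and is skewed to
the right: `f(n - u) < f(n + u)` for `0 < u < n`, which after taking logarithms is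
`artanh x > x` for `x = u / n`. Hence `∫₀ⁿ f < ∫ₙ²ⁿ f`, so `2 ∫₀ⁿ f < ∫₀²ⁿ f ≤ Γ(n + 1)`, and
truncating the integral further at `n - 1/2 = J - 3/2` only decreases it.
-/

open Real Set MeasureTheory intervalIntegral

lemma exp_two_mul_lt_one_add_div_one_sub {x : ℝ} (hx₀ : 0 < x) (hx₁ : x < 1) :
    exp (2 * x) < (1 + x) / (1 - x) := by
  have h := sum_range_le_log_div hx₀.le hx₁ 2
  norm_num [Finset.sum_range_succ] at h
  rw [← lt_log_iff_exp_lt (div_pos (by linarith) (by linarith))]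
  nlinarith [pow_pos hx₀ 3]

lemma pow_mul_exp_neg_lt_reflect {n : ℕ} {t : ℝ} (ht₀ : 0 < t) (htn : t < n) :
    t ^ n * exp (-t) < (2 * n - t) ^ n * exp (-(2 * n - t)) := by
  have hn : (0 : ℝ) < n := ht₀.trans htn
  have key := exp_two_mul_lt_one_add_div_one_sub (x := (n - t) / n)
    (div_pos (by linarith) hn) (by rw [div_lt_one hn]; linarith)
  rw [show (1 + (n - t) / n) / (1 - (n - t) / n) = (2 * n - t) / t by
    field_simp [ht₀.ne']; ring, lt_div_iff₀ ht₀] at key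
  -- raising `e^{2x} t < 2n - t` to the `n`-th power turns `e^{2x}` into `e^{2(n - t)}`
  have hpow := pow_lt_pow_left₀ key (by positivity) (Nat.cast_pos.mp hn).ne'
  rw [mul_pow, ← exp_nat_mul, show (n : ℝ) * (2 * ((n - t) / n)) = 2 * (n - t) by
    field_simp] at hpow
  calc t ^ n * exp (-t) = exp (2 * (n - t)) * t ^ n * exp (-(2 * n - t)) := by
        rw [mul_comm (exp _), mul_assoc, ← exp_add]; ring_nf
    _ < (2 * n - t) ^ n * exp (-(2 * n - t)) := by gcongr

lemma intervalIntegrable_pow_mul_exp_neg (n : ℕ) (a b : ℝ) :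
    IntervalIntegrable (fun t ↦ t ^ n * exp (-t)) volume a b :=
  (by fun_prop : Continuous fun t : ℝ ↦ t ^ n * exp (-t)).intervalIntegrable a b

lemma integral_pow_mul_exp_neg_lt_integral_reflect {n : ℕ} (hn : 0 < n) :
    ∫ t in (0 : ℝ)..n, t ^ n * exp (-t) < ∫ t in (n : ℝ)..2 * n, t ^ n * exp (-t) := by
  have hreflect : ∫ t in (0 : ℝ)..n, (2 * n - t) ^ n * exp (-(2 * n - t)) =
      ∫ t in (n : ℝ)..2 * n, t ^ n * exp (-t) := by
    rw [integral_comp_sub_left (fun t ↦ t ^ n * exp (-t))]; ring_nf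
  rw [← hreflect, ← sub_pos, ← intervalIntegral.integral_sub
    ((by fun_prop : Continuous _).intervalIntegrable _ _)
    (intervalIntegrable_pow_mul_exp_neg n _ _)]
  exact intervalIntegral_pos_of_pos_on ((by fun_prop : Continuous _).intervalIntegrable _ _)
    (fun t ht ↦ sub_pos.mpr (pow_mul_exp_neg_lt_reflect ht.1 ht.2)) (by exact_mod_cast hn)

lemma integral_pow_mul_exp_neg_le_Gamma (n : ℕ) {a : ℝ} (ha : 0 ≤ a) :
    ∫ t in (0 : ℝ)..a, t ^ n * exp (-t) ≤ Gamma (n + 1) := by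
  have hintegrand : (fun t : ℝ ↦ exp (-t) * t ^ ((n : ℝ) + 1 - 1)) = fun t ↦ t ^ n * exp (-t) := by
    simp [mul_comm]
  have hconv := GammaIntegral_convergent (s := n + 1) (by positivity)
  rw [hintegrand] at hconv
  rw [Gamma_eq_integral (by positivity), hintegrand, integral_of_le ha]
  refine setIntegral_mono_set hconv ?_ Ioc_subset_Ioi_self.eventuallyLE
  exact (ae_restrict_iff' measurableSet_Ioi).mpr (.of_forall fun t ht ↦ by
    have : 0 < t := ht; positivity)

lemma two_mul_integral_pow_mul_exp_neg_lt_Gamma {n : ℕ} (hn : 0 < n) :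
    2 * ∫ t in (0 : ℝ)..n, t ^ n * exp (-t) < Gamma (n + 1) := by
  have hsplit := integral_add_adjacent_intervals
    (intervalIntegrable_pow_mul_exp_neg n 0 n) (intervalIntegrable_pow_mul_exp_neg n n (2 * n))
  linarith [integral_pow_mul_exp_neg_lt_integral_reflect hn,
    integral_pow_mul_exp_neg_le_Gamma n (a := 2 * n) (by positivity)]

/-- For every integer `J ≥ 2`,
`(1/Γ(J)) ∫₀^{J−3/2} t^{J−1} e^{−t} dt < 1/2`, i.e. the regularized lower
incomplete Gamma function satisfies `G(J − 3/2, J) < 1/2`. -/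
theorem stmt_16 (J : ℕ) (hJ : 2 ≤ J) :
    (1 / Real.Gamma J) * ∫ t in (0:ℝ)..((J : ℝ) - 3/2), t ^ (J - 1) * Real.exp (-t)
      < 1/2 := by
  obtain ⟨n, rfl⟩ : ∃ n, J = n + 1 := ⟨J - 1, by omega⟩
  have hn : (1 : ℝ) ≤ n := by exact_mod_cast (by omega : 1 ≤ n)
  have htruncate : ∫ t in (0 : ℝ)..n - 1 / 2, t ^ n * exp (-t) ≤
      ∫ t in (0 : ℝ)..n, t ^ n * exp (-t) :=
    integral_mono_interval le_rfl (by linarith) (by linarith)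
      ((ae_restrict_iff' measurableSet_Ioc).mpr (.of_forall fun t ht ↦ by
        have : 0 < t := ht.1; positivity))
      (intervalIntegrable_pow_mul_exp_neg n 0 n)
  have hhalf := two_mul_integral_pow_mul_exp_neg_lt_Gamma (n := n) (by omega)
  rw [Nat.add_sub_cancel, one_div_mul_eq_div, div_lt_iff₀ (Gamma_pos_of_pos (by positivity))]
  push_cast at hhalf ⊢
  rw [show (n : ℝ) + 1 - 3 / 2 = n - 1 / 2 by ring]
  linarith
end

section
/- Let J ≥ 2 be an integer, let γ ≥ σ > 0, and let S be a random variable having the Gamma distribution with shape J and rate 1/γ². Then P(S < σ²·(J − 3/2)) < 1/2. -/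
/-!
The density `f` of `Γ(a, r)` with `a > 1` has its mode at `m = (a - 1)/r`, and it is skewed to the
right of the mode: `f (m - u) ≤ f (m + u)` for `u ≥ 0`, which after taking `(a - 1)`-th roots is
the elementary inequality `(1 - x) e^{2x} ≤ 1 + x`. Reflecting at `m` gives
`P(S ≤ m) ≤ P(m ≤ S ≤ 2m)`, so `P(S ≤ m) ≤ 1/2`, and the cdf is strictly increasing on `[0, ∞)`.
With rate `1/γ²` the mode is `(J - 1) γ² > σ² (J - 3/2)`.
-/

open MeasureTheory ProbabilityTheory Real Set

lemma Real.one_sub_mul_exp_two_mul_le_one_add {x : ℝ} (hx : 0 ≤ x) :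
    (1 - x) * exp (2 * x) ≤ 1 + x := by
  rcases le_or_gt 1 x with hx1 | hx1
  · nlinarith [exp_pos (2 * x)]
  -- `log (1 + x) - log (1 - x) = 2 (x + x³/3 + x⁵/5 + ⋯)`, whose first term is `2x`
  have hlog : 2 * x ≤ log (1 + x) - log (1 - x) := by
    have hsum := hasSum_log_sub_log_of_abs_lt_one (abs_lt.2 ⟨by linarith, hx1⟩)
    simpa using le_hasSum hsum 0 fun k _ ↦ by positivity
  calc (1 - x) * exp (2 * x) = exp (log (1 - x) + 2 * x) := by
        rw [exp_add, exp_log (by linarith)]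
    _ ≤ exp (log (1 + x)) := exp_le_exp.2 (by linarith)
    _ = 1 + x := exp_log (by linarith)

namespace ProbabilityTheory

variable {a r : ℝ}

lemma gammaPDFReal_mode_sub_le_mode_add (ha : 1 < a) (hr : 0 < r) {u : ℝ} (hu : 0 ≤ u) :
    gammaPDFReal a r ((a - 1) / r - u) ≤ gammaPDFReal a r ((a - 1) / r + u) := by
  set m := (a - 1) / r
  have hm : 0 < m := by positivity
  have hmr : r * m = a - 1 := by simp only [m]; field_simp
  have hright : 0 ≤ gammaPDFReal a r (m + u) := gammaPDFReal_nonneg (by linarith) hr _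
  rcases lt_or_ge m u with hum | hum
  · simpa [gammaPDFReal, not_le.2 (sub_neg.2 hum)] using hright
  have hpow : (m - u) ^ (a - 1) * exp (2 * (r * u)) ≤ (m + u) ^ (a - 1) := by
    have hbase : (m - u) * exp (2 * (u / m)) ≤ m + u := by
      have hmu : m * (u / m) = u := mul_div_cancel₀ u hm.ne'
      calc (m - u) * exp (2 * (u / m)) = m * ((1 - u / m) * exp (2 * (u / m))) := by
            linear_combination exp (2 * (u / m)) * hmu
        _ ≤ m * (1 + u / m) := mul_le_mul_of_nonneg_left
            (one_sub_mul_exp_two_mul_le_one_add (div_nonneg hu hm.le)) hm.le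
        _ = m + u := by linear_combination hmu
    have hexp : exp (2 * (r * u)) = exp (2 * (u / m)) ^ (a - 1) := by
      rw [← exp_mul, ← hmr]; congr 1; linear_combination (-2 * r) * div_mul_cancel₀ u hm.ne'
    rw [hexp, ← mul_rpow (by linarith) (exp_pos _).le]
    exact rpow_le_rpow (mul_nonneg (by linarith) (exp_pos _).le) hbase (by linarith)
  have hsplit : exp (-(r * (m - u))) = exp (2 * (r * u)) * exp (-(r * (m + u))) := by
    rw [← exp_add]; ring_nf
  simp only [gammaPDFReal, if_pos (sub_nonneg.2 hum), if_pos (add_nonneg hm.le hu), hsplit]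
  calc r ^ a / Gamma a * (m - u) ^ (a - 1) * (exp (2 * (r * u)) * exp (-(r * (m + u))))
      = r ^ a / Gamma a * ((m - u) ^ (a - 1) * exp (2 * (r * u))) * exp (-(r * (m + u))) := by
        ring
    _ ≤ r ^ a / Gamma a * (m + u) ^ (a - 1) * exp (-(r * (m + u))) := by gcongr

lemma integrable_gammaPDFReal (ha : 0 < a) (hr : 0 < r) : Integrable (gammaPDFReal a r) := by
  have h := integrable_toReal_of_lintegral_ne_top (μ := volume)
    (measurable_gammaPDFReal a r).ennreal_ofReal.aemeasurable
    ((lintegral_gammaPDF_eq_one ha hr).trans_ne ENNReal.one_ne_top)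
  simpa [ENNReal.toReal_ofReal (gammaPDFReal_nonneg ha hr _)] using h

lemma cdf_gammaMeasure_sub_cdf (ha : 0 < a) (hr : 0 < r) (x y : ℝ) :
    cdf (gammaMeasure a r) y - cdf (gammaMeasure a r) x = ∫ t in x..y, gammaPDFReal a r t := by
  have hf := integrable_gammaPDFReal ha hr
  rw [cdf_gammaMeasure_eq_integral ha hr, cdf_gammaMeasure_eq_integral ha hr,
    intervalIntegral.integral_Iic_sub_Iic hf.integrableOn hf.integrableOn]

lemma cdf_gammaMeasure_zero (ha : 0 < a) (hr : 0 < r) : cdf (gammaMeasure a r) 0 = 0 := by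
  rw [cdf_gammaMeasure_eq_lintegral ha hr, ← setLIntegral_congr Iio_ae_eq_Iic,
    lintegral_gammaPDF_of_nonpos le_rfl, ENNReal.toReal_zero]

lemma cdf_gammaMeasure_lt_of_lt (ha : 0 < a) (hr : 0 < r) {c d : ℝ} (hc : 0 ≤ c) (hcd : c < d) :
    cdf (gammaMeasure a r) c < cdf (gammaMeasure a r) d := by
  have hpos : 0 < ∫ t in c..d, gammaPDFReal a r t :=
    intervalIntegral.intervalIntegral_pos_of_pos_on
      (integrable_gammaPDFReal ha hr).intervalIntegrable
      (fun t ht ↦ gammaPDFReal_pos ha hr (hc.trans_lt ht.1)) hcd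
  linarith [cdf_gammaMeasure_sub_cdf ha hr c d]

lemma cdf_gammaMeasure_mode_le_half (ha : 1 < a) (hr : 0 < r) :
    cdf (gammaMeasure a r) ((a - 1) / r) ≤ 1 / 2 := by
  set m := (a - 1) / r
  set f := gammaPDFReal a r
  have ha0 : 0 < a := by linarith
  have hm : 0 ≤ m := by positivity
  have hf := integrable_gammaPDFReal ha0 hr
  have hreflect : ∫ t in 0..m, f t ≤ ∫ t in m..m + m, f t :=
    calc ∫ t in 0..m, f t = ∫ u in 0..m, f (m - u) := by
          rw [intervalIntegral.integral_comp_sub_left]; simp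
      _ ≤ ∫ u in 0..m, f (m + u) :=
          intervalIntegral.integral_mono_on hm (hf.comp_sub_left m).intervalIntegrable
            (hf.comp_add_left m).intervalIntegrable
            fun u hu ↦ gammaPDFReal_mode_sub_le_mode_add ha hr hu.1
      _ = ∫ t in m..m + m, f t := by
          rw [intervalIntegral.integral_comp_add_left]; simp
  have : IsProbabilityMeasure (gammaMeasure a r) := isProbabilityMeasure_gammaMeasure ha0 hr
  have h0 := cdf_gammaMeasure_sub_cdf ha0 hr 0 m
  have h2 := cdf_gammaMeasure_sub_cdf ha0 hr m (m + m)
  linarith [cdf_gammaMeasure_zero ha0 hr, cdf_le_one (gammaMeasure a r) (m + m)]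

lemma cdf_gammaMeasure_lt_half_of_lt_mode (ha : 1 < a) (hr : 0 < r) {c : ℝ} (hc : 0 ≤ c)
    (hcm : c < (a - 1) / r) : cdf (gammaMeasure a r) c < 1 / 2 :=
  (cdf_gammaMeasure_lt_of_lt (by linarith) hr hc hcm).trans_le
    (cdf_gammaMeasure_mode_le_half ha hr)

end ProbabilityTheory

/-- Let `J ≥ 2`, `γ ≥ σ > 0`, and let `S` have the Gamma
distribution with shape `J` and rate `1/γ²`. Then `P(S < σ²(J − 3/2)) < 1/2`. -/
theorem stmt_17 {Ω : Type*} [MeasurableSpace Ω] (P : Measure Ω) [IsProbabilityMeasure P]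
    (J : ℕ) (hJ : 2 ≤ J) (γ σ : ℝ) (hσ : 0 < σ) (hγ : σ ≤ γ)
    (S : Ω → ℝ) (hS : Measurable S)
    (hSd : P.map S = gammaMeasure J (1 / γ^2)) :
    P {ω | S ω < σ^2 * ((J : ℝ) - 3/2)} < 1/2 := by
  set c := σ ^ 2 * ((J : ℝ) - 3 / 2) with hc_def
  set μ := gammaMeasure J (1 / γ ^ 2)
  have hJ' : (2 : ℝ) ≤ J := by exact_mod_cast hJ
  have hr : 0 < 1 / γ ^ 2 := by have := hσ.trans_le hγ; positivity
  have hc : 0 ≤ c := mul_nonneg (sq_nonneg σ) (by linarith)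
  have hcm : c < ((J : ℝ) - 1) / (1 / γ ^ 2) := by
    rw [div_div_eq_mul_div, div_one, hc_def]
    have : σ ^ 2 ≤ γ ^ 2 := pow_le_pow_left₀ hσ.le hγ 2
    nlinarith [pow_pos hσ 2]
  have : IsProbabilityMeasure μ := isProbabilityMeasure_gammaMeasure (by linarith) hr
  calc P {ω | S ω < c} = μ (Iio c) := by rw [← hSd, Measure.map_apply hS measurableSet_Iio]; rfl
    _ ≤ μ (Iic c) := measure_mono Iio_subset_Iic_self
    _ = ENNReal.ofReal (cdf μ c) := (ofReal_cdf μ c).symm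
    _ < 1 / 2 := by
        rw [← ENNReal.ofReal_one, ← ENNReal.ofReal_ofNat 2, ← ENNReal.ofReal_div_of_pos two_pos]
        exact (ENNReal.ofReal_lt_ofReal_iff (by norm_num)).2
          (cdf_gammaMeasure_lt_half_of_lt_mode (by linarith) hr hc hcm)
end
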